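/- Let q ≥ 2, b ≥ 2, k ≥ 1, ρ ≥ 1, ℓ be integers and 0 ≤ h₀,…,h_{k−1} < q^ρ. Define S₁₀(h₀,…,h_{k−1}) := ∑_{0 ≤ n < q^ρ} e( (ℓ/b) · ∑_{w=(w₀,…,w_{k−1}) ∈ {0,1}^k} (−1)^{s₂(w)} s_q^ρ(n + ∑_{i=0}^{k−1} w_i h_i) ). Then |S₁₀(h₀,…,h_{k−1})|² = ∑_{0 ≤ h_k < q^ρ} S₁₀(h₀,…,h_{k−1},h_k), where S₁₀ with k+1 shifts is defined analogously with w ∈ {0,1}^{k+1}. -/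

import Mathlib

open scoped Real

/-- Base-q digit sum. -/
def sqd (q n : ℕ) : ℕ := (Nat.digits q n).sum

/-- Truncated base-q digit sum: digit sum of `n mod q^α`. -/
def sqT (q α n : ℕ) : ℕ := sqd q (n % q ^ α)

/-- `e(t) = exp(2πit)`. -/
noncomputable def e (t : ℝ) : ℂ := Complex.exp (2 * Real.pi * Complex.I * t)

/-- The Gowers-type sum `S₁₀` with `k` shifts `h₀,…,h_{k−1}`. -/
noncomputable def S10 (q b ρ : ℕ) (ℓ : ℤ) (k : ℕ) (h : ℕ → ℕ) : ℂ :=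
  ∑ n ∈ Finset.range (q ^ ρ),
    e ((ℓ : ℝ) / b * ∑ w ∈ Finset.range (2 ^ k),
        (-1 : ℝ) ^ (Nat.digits 2 w).sum *
          (sqT q ρ (n + ∑ i ∈ Finset.range k, if w.testBit i then h i else 0) : ℝ))

/-!
Write `Dₖ(n) = ∑_{w ∈ {0,1}^k} (-1)^{s₂(w)} s_q^ρ(n + w·h)`. Splitting the cube `{0,1}^{k+1}`
along its last coordinate gives `D_{k+1}(n) = Dₖ(n) - Dₖ(n + h_k)`, so the right-hand side is
`∑_{h_k} ∑_n e(ℓ/b · Dₖ(n)) · conj e(ℓ/b · Dₖ(n + h_k))`. Since `Dₖ` is `q^ρ`-periodic, the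
substitution `m = n + h_k` runs over a full period, and this is `|∑_n e(ℓ/b · Dₖ(n))|²`.
-/

open Finset

lemma e_add (x y : ℝ) : e (x + y) = e x * e y := by
  simp only [e, Complex.ofReal_add, mul_add, Complex.exp_add]

lemma conj_e (x : ℝ) : (starRingEnd ℂ) (e x) = e (-x) := by
  rw [e, e, ← Complex.exp_conj]
  congr 1
  simp only [map_mul, Complex.conj_I, Complex.conj_ofReal, map_ofNat, Complex.ofReal_neg]
  ring

lemma Nat.sum_digits_two_two_pow_add {k w : ℕ} (hw : w < 2 ^ k) :
    (Nat.digits 2 (2 ^ k + w)).sum = (Nat.digits 2 w).sum + 1 := by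
  have hlen : (Nat.digits 2 w).length ≤ k := (Nat.digits_length_le_iff (by norm_num) w).mpr hw
  have := Nat.digits_append_zeroes_append_digits (b := 2) (k := k - (Nat.digits 2 w).length)
    (m := 1) (n := w) (by norm_num) (by norm_num)
  rw [Nat.add_sub_cancel' hlen, mul_one, add_comm] at this
  rw [← this]
  simp

lemma Function.Periodic.sum_range_add {M : Type*} [AddCommMonoid M] {f : ℕ → M} {N : ℕ}
    (hf : Function.Periodic f N) (n : ℕ) :
    ∑ i ∈ range N, f (n + i) = ∑ i ∈ range N, f i := by
  induction n with
  | zero => simp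
  | succ n ih =>
    rw [← ih]
    rcases N with _ | M
    · simp
    · rw [sum_range_succ, sum_range_succ', add_zero, ← hf n]
      simp only [add_right_comm n 1, add_assoc]

lemma sum_testBit_update_of_lt (k w t : ℕ) (h : ℕ → ℕ) (hw : w < 2 ^ k) :
    ∑ i ∈ range (k + 1), (if w.testBit i then Function.update h k t i else 0) =
      ∑ i ∈ range k, if w.testBit i then h i else 0 := by
  rw [sum_range_succ, Nat.testBit_eq_false_of_lt hw, if_neg Bool.false_ne_true, add_zero]
  refine sum_congr rfl fun i hi => ?_
  rw [Function.update_of_ne (mem_range.mp hi).ne]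

lemma sum_testBit_update_two_pow_add (k w t : ℕ) (h : ℕ → ℕ) (hw : w < 2 ^ k) :
    ∑ i ∈ range (k + 1), (if (2 ^ k + w).testBit i then Function.update h k t i else 0) =
      (∑ i ∈ range k, if w.testBit i then h i else 0) + t := by
  rw [sum_range_succ, Nat.testBit_two_pow_add_eq, Nat.testBit_eq_false_of_lt hw,
    Function.update_self]
  congr 1
  refine sum_congr rfl fun i hi => ?_
  rw [Nat.testBit_two_pow_add_gt (mem_range.mp hi), Function.update_of_ne (mem_range.mp hi).ne]

/-- `w < 2 ^ k` encodes the vertex `(w₀,…,w_{k-1}) ∈ {0,1}^k` by its binary digits. -/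
def cubeSum {R : Type*} [Ring R] (f : ℕ → R) (k : ℕ) (h : ℕ → ℕ) (n : ℕ) : R :=
  ∑ w ∈ range (2 ^ k),
    (-1 : R) ^ (Nat.digits 2 w).sum * f (n + ∑ i ∈ range k, if w.testBit i then h i else 0)

section cubeSum

variable {R : Type*} [Ring R]

lemma cubeSum_succ_update (f : ℕ → R) (k : ℕ) (h : ℕ → ℕ) (t n : ℕ) :
    cubeSum f (k + 1) (Function.update h k t) n = cubeSum f k h n - cubeSum f k h (n + t) := by
  rw [cubeSum, pow_succ, mul_two, sum_range_add, sub_eq_add_neg, cubeSum, cubeSum,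
    ← sum_neg_distrib]
  congr 1
  · refine sum_congr rfl fun w hw => ?_
    rw [sum_testBit_update_of_lt k w t h (mem_range.mp hw)]
  · refine sum_congr rfl fun w hw => ?_
    rw [sum_testBit_update_two_pow_add k w t h (mem_range.mp hw),
      Nat.sum_digits_two_two_pow_add (mem_range.mp hw), pow_succ, add_comm _ t, ← add_assoc]
    noncomm_ring

lemma Function.Periodic.cubeSum {f : ℕ → R} {N : ℕ} (hf : Function.Periodic f N) (k : ℕ)
    (h : ℕ → ℕ) : Function.Periodic (cubeSum f k h) N := fun n => by
  simp only [_root_.cubeSum, add_right_comm n N, hf _]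

end cubeSum

lemma periodic_sqT (q ρ : ℕ) : Function.Periodic (fun n => (sqT q ρ n : ℝ)) (q ^ ρ) :=
  fun n => by
  simp only [sqT, Nat.add_mod_right]

lemma ofReal_norm_sq_sum_e {F : ℕ → ℝ} {N : ℕ} (hF : Function.Periodic F N) :
    ((‖∑ n ∈ range N, e (F n)‖ ^ 2 : ℝ) : ℂ) =
      ∑ t ∈ range N, ∑ n ∈ range N, e (F n - F (n + t)) := by
  have hconj : Function.Periodic (fun m => (starRingEnd ℂ) (e (F m))) N := fun m => by
    simp only [hF m]
  calc ((‖∑ n ∈ range N, e (F n)‖ ^ 2 : ℝ) : ℂ)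
      = (∑ n ∈ range N, e (F n)) * (starRingEnd ℂ) (∑ m ∈ range N, e (F m)) := by
        rw [Complex.mul_conj, Complex.normSq_eq_norm_sq]
    _ = ∑ n ∈ range N, ∑ t ∈ range N, e (F n) * (starRingEnd ℂ) (e (F (n + t))) := by
        rw [map_sum, sum_mul]
        refine sum_congr rfl fun n _ => ?_
        rw [← hconj.sum_range_add n, mul_sum]
    _ = ∑ t ∈ range N, ∑ n ∈ range N, e (F n - F (n + t)) := by
        rw [sum_comm]
        simp only [conj_e, sub_eq_add_neg, e_add]

theorem stmt14_general (q b k ρ : ℕ) (ℓ : ℤ) (h : ℕ → ℕ) :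
    ((‖S10 q b ρ ℓ k h‖ ^ 2 : ℝ) : ℂ) =
      ∑ hk' ∈ Finset.range (q ^ ρ), S10 q b ρ ℓ (k + 1) (Function.update h k hk') := by
  set D := cubeSum (fun n => (sqT q ρ n : ℝ))
  have hS10 : ∀ k h, S10 q b ρ ℓ k h = ∑ n ∈ range (q ^ ρ), e (ℓ / b * D k h n) :=
    fun _ _ => rfl
  rw [hS10, ofReal_norm_sq_sum_e (F := fun n => ℓ / b * D k h n)
    (((periodic_sqT q ρ).cubeSum k h).comp _)]
  refine sum_congr rfl fun t _ => ?_
  simp only [hS10, cubeSum_succ_update, mul_sub, D]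

theorem stmt14 (q b k ρ : ℕ) (ℓ : ℤ) (hq : 2 ≤ q) (hb : 2 ≤ b) (hk : 1 ≤ k)
    (hρ : 1 ≤ ρ) (h : ℕ → ℕ) (hh : ∀ i < k, h i < q ^ ρ) :
    ((‖S10 q b ρ ℓ k h‖ ^ 2 : ℝ) : ℂ) =
      ∑ hk' ∈ Finset.range (q ^ ρ), S10 q b ρ ℓ (k + 1) (Function.update h k hk') :=
  stmt14_general q b k ρ ℓ h
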